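/- arXiv:2602.04408 — 2 statements merged into one kernel-verified Lean document; each statement's English description precedes it below -/
import Mathlib

section
/- Let U and Z be discrete random variables with finite support, and let f, g be real-valued bounded functions with E[f(U)] = 0 and E[g(Z)] = 0. Then |E[f(U) g(Z)]| ≤ ||f||_∞ · ||g||_∞ · √(2 I(U;Z)). -/
open scoped BigOperators

noncomputable section

/-- Probability of an event under a weight function `μ` on a finite sample space. -/
def pr {Ω : Type*} [Fintype Ω] (μ : Ω → ℝ) (A : Set Ω) : ℝ :=
  ∑ ω, A.indicator μ ω

/-- `μ` is a probability mass function on the finite sample space. -/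
def IsPMF {Ω : Type*} [Fintype Ω] (μ : Ω → ℝ) : Prop :=
  (∀ ω, 0 ≤ μ ω) ∧ (∑ ω, μ ω) = 1

/-- Mutual information `I(U;Z)` (in nats) of finitely-valued random variables. -/
def MI {Ω α β : Type*} [Fintype Ω] [Fintype α] [Fintype β]
    (μ : Ω → ℝ) (U : Ω → α) (Z : Ω → β) : ℝ :=
  ∑ a : α, ∑ b : β,
    pr μ {ω | U ω = a ∧ Z ω = b} *
      Real.log (pr μ {ω | U ω = a ∧ Z ω = b} /
        (pr μ {ω | U ω = a} * pr μ {ω | Z ω = b}))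

/-- Conditional mutual information `I(U;Z∣Y)` (in nats). -/
def condMI {Ω α β γ : Type*} [Fintype Ω] [Fintype α] [Fintype β] [Fintype γ]
    (μ : Ω → ℝ) (U : Ω → α) (Z : Ω → β) (Y : Ω → γ) : ℝ :=
  ∑ y : γ, ∑ a : α, ∑ b : β,
    pr μ {ω | U ω = a ∧ Z ω = b ∧ Y ω = y} *
      Real.log ((pr μ {ω | Y ω = y} * pr μ {ω | U ω = a ∧ Z ω = b ∧ Y ω = y}) /
        (pr μ {ω | U ω = a ∧ Y ω = y} * pr μ {ω | Z ω = b ∧ Y ω = y}))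

/-- Shannon entropy `H(Y)` (in nats). -/
def ent {Ω γ : Type*} [Fintype Ω] [Fintype γ] (μ : Ω → ℝ) (Y : Ω → γ) : ℝ :=
  -∑ y : γ, pr μ {ω | Y ω = y} * Real.log (pr μ {ω | Y ω = y})

/-- Conditional entropy `H(Z∣Y)` (in nats). -/
def condEnt {Ω β γ : Type*} [Fintype Ω] [Fintype β] [Fintype γ]
    (μ : Ω → ℝ) (Z : Ω → β) (Y : Ω → γ) : ℝ :=
  ∑ y : γ, ∑ b : β,
    pr μ {ω | Z ω = b ∧ Y ω = y} *
      Real.log (pr μ {ω | Y ω = y} / pr μ {ω | Z ω = b ∧ Y ω = y})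

/-- Conditional independence `X ⊥ Z ∣ Y` (cross-multiplied form, valid also when
`P(Y = y) = 0`). -/
def CondIndep {Ω α β γ : Type*} [Fintype Ω]
    (μ : Ω → ℝ) (X : Ω → α) (Z : Ω → β) (Y : Ω → γ) : Prop :=
  ∀ (x : α) (z : β) (y : γ),
    pr μ {ω | Y ω = y} * pr μ {ω | X ω = x ∧ Z ω = z ∧ Y ω = y} =
      pr μ {ω | X ω = x ∧ Y ω = y} * pr μ {ω | Z ω = z ∧ Y ω = y}

end

/-! Writing `P` for the joint law of `(U, Z)` and `Q` for the product of its marginals, the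
centring of `f` gives `E[f(U) g(Z)] = ∑ (P - Q)(a, b) f(a) g(b)`, which is at most
`‖f‖_∞ ‖g‖_∞ ‖P - Q‖₁`, and Pinsker's inequality bounds `‖P - Q‖₁` by
`√(2 KL(P ‖ Q)) = √(2 I(U;Z))`.
Pinsker's inequality itself follows by Cauchy–Schwarz from the pointwise bound
`3 (t - 1)² ≤ 2 (t + 2) (t log t - t + 1)`, whose right side minus left side is convex with a
double zero at `t = 1`. -/

open Real Set Finset InformationTheory

lemma three_mul_sq_sub_one_le_mul_klFun {t : ℝ} (ht : 0 ≤ t) :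
    3 * (t - 1) ^ 2 ≤ 2 * (t + 2) * klFun t := by
  let h : ℝ → ℝ := fun s ↦ 2 * (s + 2) * klFun s - 3 * (s - 1) ^ 2
  let h' : ℝ → ℝ := fun s ↦ 2 * klFun s + 2 * (s + 2) * log s - 6 * (s - 1)
  have hasDerivAt_h {s : ℝ} (hs : s ≠ 0) : HasDerivAt h (h' s) s :=
    ((((hasDerivAt_id s).add_const 2).const_mul 2).mul (hasDerivAt_klFun hs)).sub
      ((((hasDerivAt_id s).sub_const 1).pow 2).const_mul 3)
      |>.congr_deriv (by simp [h']; ring)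
  have hasDerivAt_h' {s : ℝ} (hs : s ≠ 0) : HasDerivAt h' (4 * (log s + s⁻¹ - 1)) s :=
    (((hasDerivAt_klFun hs).const_mul 2).add
      ((((hasDerivAt_id s).add_const 2).const_mul 2).mul (hasDerivAt_log hs))).sub
      (((hasDerivAt_id s).sub_const 1).const_mul 6)
      |>.congr_deriv (by simp only [id]; field_simp; ring)
  have convex_h : ConvexOn ℝ (Ici 0) h := by
    refine convexOn_of_hasDerivWithinAt2_nonneg (f' := h') (f'' := fun s ↦ 4 * (log s + s⁻¹ - 1))
      (convex_Ici 0) (by fun_prop (disch := exact continuous_klFun)) ?_ ?_ ?_ <;>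
      simp only [interior_Ici] <;> intro s (hs : 0 < s)
    · exact (hasDerivAt_h hs.ne').hasDerivWithinAt
    · exact (hasDerivAt_h' hs.ne').hasDerivWithinAt
    · linarith [one_sub_inv_le_log_of_pos hs]
  have rightDeriv_h_one : derivWithin h (Ioi 1) 1 = 0 := by
    rw [(hasDerivAt_h one_ne_zero).hasDerivWithinAt.derivWithin (uniqueDiffWithinAt_Ioi 1)]
    simp [h', klFun_one]
  have := convex_h.isMinOn_of_rightDeriv_eq_zero (by simp) rightDeriv_h_one ht
  simpa [h, klFun_one] using this

lemma mul_log_div_sub_add_eq_mul_klFun (x : ℝ) {y : ℝ} (hy : y ≠ 0) :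
    x * log (x / y) - x + y = y * klFun (x / y) := by
  rw [klFun_apply]
  field_simp
  ring

lemma mul_log_div_sub_add_nonneg {x y : ℝ} (hx : 0 ≤ x) (hy : 0 ≤ y)
    (hxy : y = 0 → x = 0) : 0 ≤ x * log (x / y) - x + y := by
  rcases hy.eq_or_lt with rfl | hy
  · simp [hxy rfl]
  rw [mul_log_div_sub_add_eq_mul_klFun x hy.ne']
  exact mul_nonneg hy.le (klFun_nonneg (div_nonneg hx hy.le))

lemma three_mul_sq_sub_le_mul_log_div_sub_add {x y : ℝ} (hx : 0 ≤ x) (hy : 0 < y) :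
    3 * (x - y) ^ 2 ≤ 2 * (x + 2 * y) * (x * log (x / y) - x + y) := by
  rw [mul_log_div_sub_add_eq_mul_klFun x hy.ne']
  calc 3 * (x - y) ^ 2 = y ^ 2 * (3 * (x / y - 1) ^ 2) := by field_simp
    _ ≤ y ^ 2 * (2 * (x / y + 2) * klFun (x / y)) :=
      mul_le_mul_of_nonneg_left (three_mul_sq_sub_one_le_mul_klFun (div_nonneg hx hy.le))
        (sq_nonneg y)
    _ = 2 * (x + 2 * y) * (y * klFun (x / y)) := by field_simp

/-- Pinsker's inequality. -/
theorem sum_abs_sub_le_sqrt_two_mul_sum_mul_log_div {ι : Type*} [Fintype ι] {p q : ι → ℝ}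
    (hp : IsPMF p) (hq : IsPMF q) (hpq : ∀ i, q i = 0 → p i = 0) :
    ∑ i, |p i - q i| ≤ √(2 * ∑ i, p i * log (p i / q i)) := by
  obtain ⟨hp, hp1⟩ := hp
  obtain ⟨hq, hq1⟩ := hq
  have hKL : ∑ i, p i * log (p i / q i) = ∑ i, (p i * log (p i / q i) - p i + q i) := by
    simp [sum_add_distrib, sum_sub_distrib, hp1, hq1]
  have pointwise (i : ι) : |p i - q i| ^ 2 ≤
      (p i * log (p i / q i) - p i + q i) * (2 * (p i + 2 * q i) / 3) := by
    rcases (hq i).eq_or_lt with hqi | hqi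
    · simp [← hqi, hpq i hqi.symm]
    · nlinarith [sq_abs (p i - q i), three_mul_sq_sub_le_mul_log_div_sub_add (hp i) hqi]
  -- Cauchy–Schwarz against the weights `2 (p + 2 q) / 3`, which sum to `2`.
  have cauchySchwarz := sum_sq_le_sum_mul_sum_of_sq_le_mul univ
    (fun i _ ↦ mul_log_div_sub_add_nonneg (hp i) (hq i) (hpq i))
    (fun i _ ↦ by linarith [hp i, hq i]) (fun i _ ↦ pointwise i)
  have hweights : ∑ i, 2 * (p i + 2 * q i) / 3 = 2 := by
    simp only [← sum_div, ← mul_sum, sum_add_distrib, hp1, hq1]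
    norm_num
  rw [← hKL, hweights] at cauchySchwarz
  exact le_sqrt_of_sq_le (by linarith)

section Law

variable {Ω : Type*} [Fintype Ω] {μ : Ω → ℝ}

lemma IsPMF.nonempty (hμ : IsPMF μ) : Nonempty Ω := by
  by_contra h
  simpa [not_nonempty_iff.mp h] using hμ.2

lemma pr_nonneg (hμ : ∀ ω, 0 ≤ μ ω) (A : Set Ω) : 0 ≤ pr μ A :=
  sum_nonneg fun ω _ ↦ Set.indicator_nonneg (fun ω _ ↦ hμ ω) ω

lemma pr_mono (hμ : ∀ ω, 0 ≤ μ ω) {A B : Set Ω} (hAB : A ⊆ B) : pr μ A ≤ pr μ B :=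
  sum_le_sum fun ω _ ↦ Set.indicator_le_indicator_of_subset hAB (fun ω ↦ hμ ω) ω

lemma sum_pr_fiber_mul {γ : Type*} [Fintype γ] (μ : Ω → ℝ) (V : Ω → γ) (F : γ → ℝ) :
    ∑ c, pr μ {ω | V ω = c} * F c = ∑ ω, μ ω * F (V ω) := by
  classical
  simp only [pr, Set.indicator_apply, sum_mul, ite_mul, zero_mul]
  rw [sum_comm]
  simp

end Law

lemma abs_sum_mul_le_mul_sum_abs {ι : Type*} (s : Finset ι) (c h : ι → ℝ) {M : ℝ}
    (hh : ∀ i ∈ s, c i ≠ 0 → |h i| ≤ M) : |∑ i ∈ s, c i * h i| ≤ M * ∑ i ∈ s, |c i| := by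
  rw [mul_sum]
  refine (abs_sum_le_sum_abs _ _).trans (sum_le_sum fun i hi ↦ ?_)
  rcases eq_or_ne (c i) 0 with hc | hc
  · simp [hc]
  · rw [abs_mul, mul_comm M]
    exact mul_le_mul_of_nonneg_left (hh i hi hc) (abs_nonneg _)

section JointLaw

variable {Ω α β : Type*} [Fintype Ω] (μ : Ω → ℝ) (U : Ω → α) (Z : Ω → β)

noncomputable def jointLaw (s : α × β) : ℝ := pr μ {ω | U ω = s.1 ∧ Z ω = s.2}

noncomputable def prodLaw (s : α × β) : ℝ := pr μ {ω | U ω = s.1} * pr μ {ω | Z ω = s.2}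

variable {μ U Z}

lemma jointLaw_eq_zero_of_prodLaw_eq_zero (hμ : ∀ ω, 0 ≤ μ ω) {s : α × β}
    (hs : prodLaw μ U Z s = 0) : jointLaw μ U Z s = 0 := by
  refine le_antisymm ?_ (pr_nonneg hμ _)
  rcases mul_eq_zero.mp hs with h | h
  · exact h ▸ pr_mono hμ fun ω hω ↦ hω.1
  · exact h ▸ pr_mono hμ fun ω hω ↦ hω.2

lemma exists_eq_of_jointLaw_sub_prodLaw_ne_zero {s : α × β}
    (hs : jointLaw μ U Z s - prodLaw μ U Z s ≠ 0) : (∃ ω, U ω = s.1) ∧ ∃ ω, Z ω = s.2 := by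
  constructor <;> by_contra! h <;> exact hs (by simp [jointLaw, prodLaw, pr, h])

variable [Fintype α] [Fintype β] (μ U Z)

lemma sum_jointLaw_mul (F : α × β → ℝ) :
    ∑ s, jointLaw μ U Z s * F s = ∑ ω, μ ω * F (U ω, Z ω) := by
  simpa [jointLaw, Prod.ext_iff] using sum_pr_fiber_mul μ (fun ω ↦ (U ω, Z ω)) F

lemma sum_prodLaw_mul_mul (f : α → ℝ) (g : β → ℝ) :
    ∑ s, prodLaw μ U Z s * (f s.1 * g s.2) =
      (∑ ω, μ ω * f (U ω)) * ∑ ω, μ ω * g (Z ω) := by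
  rw [← sum_pr_fiber_mul μ U f, ← sum_pr_fiber_mul μ Z g, sum_mul_sum, Fintype.sum_prod_type]
  simp only [prodLaw, mul_mul_mul_comm]

lemma MI_eq_sum_jointLaw_mul_log :
    MI μ U Z = ∑ s, jointLaw μ U Z s * log (jointLaw μ U Z s / prodLaw μ U Z s) := by
  rw [Fintype.sum_prod_type]
  rfl

variable {μ}

lemma isPMF_jointLaw (hμ : IsPMF μ) : IsPMF (jointLaw μ U Z) :=
  ⟨fun _ ↦ pr_nonneg hμ.1 _, by simpa [hμ.2] using sum_jointLaw_mul μ U Z 1⟩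

lemma isPMF_prodLaw (hμ : IsPMF μ) : IsPMF (prodLaw μ U Z) :=
  ⟨fun _ ↦ mul_nonneg (pr_nonneg hμ.1 _) (pr_nonneg hμ.1 _),
    by simpa [hμ.2] using sum_prodLaw_mul_mul μ U Z 1 1⟩

end JointLaw

section Covariance

variable {Ω α β : Type*} [Fintype Ω] [Fintype α] [Fintype β]
  {μ : Ω → ℝ} {U : Ω → α} {Z : Ω → β}

theorem sum_abs_jointLaw_sub_prodLaw_le_sqrt_two_mul_MI (hμ : IsPMF μ) :
    ∑ s, |jointLaw μ U Z s - prodLaw μ U Z s| ≤ √(2 * MI μ U Z) := by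
  rw [MI_eq_sum_jointLaw_mul_log]
  exact sum_abs_sub_le_sqrt_two_mul_sum_mul_log_div (isPMF_jointLaw U Z hμ)
    (isPMF_prodLaw U Z hμ) fun _ ↦ jointLaw_eq_zero_of_prodLaw_eq_zero hμ.1

lemma abs_sum_mul_mul_le_mul_sum_abs_jointLaw_sub_prodLaw {f : α → ℝ} {g : β → ℝ} {Mf Mg : ℝ}
    (hf : ∀ ω, |f (U ω)| ≤ Mf) (hg : ∀ ω, |g (Z ω)| ≤ Mg) (hfm : ∑ ω, μ ω * f (U ω) = 0) :
    |∑ ω, μ ω * (f (U ω) * g (Z ω))| ≤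
      Mf * Mg * ∑ s, |jointLaw μ U Z s - prodLaw μ U Z s| := by
  have hcov : ∑ ω, μ ω * (f (U ω) * g (Z ω)) =
      ∑ s, (jointLaw μ U Z s - prodLaw μ U Z s) * (f s.1 * g s.2) := by
    simp only [sub_mul, sum_sub_distrib, sum_jointLaw_mul, sum_prodLaw_mul_mul, hfm, zero_mul,
      sub_zero]
  rw [hcov]
  refine abs_sum_mul_le_mul_sum_abs _ _ _ fun s _ hs ↦ ?_
  obtain ⟨⟨ω₁, hω₁⟩, ω₂, hω₂⟩ := exists_eq_of_jointLaw_sub_prodLaw_ne_zero hs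
  rw [abs_mul, ← hω₁, ← hω₂]
  exact mul_le_mul (hf ω₁) (hg ω₂) (abs_nonneg _) ((abs_nonneg _).trans (hf ω₁))

end Covariance

theorem abs_cov_le_sqrt_two_MI_general
    {Ω α β : Type*} [Fintype Ω] [Fintype α] [Fintype β]
    (μ : Ω → ℝ) (hμ : IsPMF μ) (U : Ω → α) (Z : Ω → β)
    (f : α → ℝ) (g : β → ℝ) (Mf Mg : ℝ)
    (hf : ∀ ω, |f (U ω)| ≤ Mf) (hg : ∀ ω, |g (Z ω)| ≤ Mg)
    (hfm : (∑ ω, μ ω * f (U ω)) = 0) :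
    |∑ ω, μ ω * (f (U ω) * g (Z ω))| ≤ Mf * Mg * Real.sqrt (2 * MI μ U Z) := by
  obtain ⟨ω₀⟩ := hμ.nonempty
  have hM : 0 ≤ Mf * Mg :=
    mul_nonneg ((abs_nonneg _).trans (hf ω₀)) ((abs_nonneg _).trans (hg ω₀))
  calc |∑ ω, μ ω * (f (U ω) * g (Z ω))|
      ≤ Mf * Mg * ∑ s, |jointLaw μ U Z s - prodLaw μ U Z s| :=
        abs_sum_mul_mul_le_mul_sum_abs_jointLaw_sub_prodLaw hf hg hfm
    _ ≤ Mf * Mg * √(2 * MI μ U Z) :=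
        mul_le_mul_of_nonneg_left (sum_abs_jointLaw_sub_prodLaw_le_sqrt_two_mul_MI hμ) hM

/-- mutual information uniformly controls the covariance of bounded
zero-mean functionals: `|E[f(U) g(Z)]| ≤ ‖f‖_∞ ‖g‖_∞ √(2 I(U;Z))`. -/
theorem abs_cov_le_sqrt_two_MI
    {Ω α β : Type*} [Fintype Ω] [Fintype α] [Fintype β]
    (μ : Ω → ℝ) (hμ : IsPMF μ) (U : Ω → α) (Z : Ω → β)
    (f : α → ℝ) (g : β → ℝ) (Mf Mg : ℝ)
    (hf : ∀ ω, |f (U ω)| ≤ Mf) (hg : ∀ ω, |g (Z ω)| ≤ Mg)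
    (hfm : (∑ ω, μ ω * f (U ω)) = 0) (hgm : (∑ ω, μ ω * g (Z ω)) = 0) :
    |∑ ω, μ ω * (f (U ω) * g (Z ω))| ≤ Mf * Mg * Real.sqrt (2 * MI μ U Z) :=
  abs_cov_le_sqrt_two_MI_general μ hμ U Z f g Mf Mg hf hg hfm
end

section
/- For each ε ∈ (0, 1/2), let Y be Bernoulli with P(Y=0)=ε, set Z = Y, and define f(Y) = (1{Y=0} − ε)/√(ε(1−ε)) and g(Z) = (1{Z=0} − ε)/√(ε(1−ε)). Then E[f(Y)] = E[g(Z)] = 0, Cov(f(Y), g(Z)) = 1, while I(Y;Z) = H(Y) = −ε log ε − (1−ε) log(1−ε) → 0 as ε → 0. Hence no inequality of the form |Cov(f,g)|/(||f||_{L²} ||g||_{L²}) ≤ √(2 I(Y;Z)) can hold in general. -/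
open scoped BigOperators

open Filter Topology

/-!
Since `Z = Y`, the mutual information `I(Y;Z)` is the entropy `H(Y)` of a Bernoulli(ε) variable,
which tends to `0` with `ε`, whereas the standardized indicator `f = g` of `{Y = 0}` has
correlation `1` with itself. So for small `ε` the bound `√(2 I(Y;Z)) < 1` is violated.
-/

open Real

section InformationTheory

variable {Ω α : Type*} [Fintype Ω] (μ : Ω → ℝ)

theorem pr_setOf_eq (y : Ω) : pr μ {ω | ω = y} = μ y := by
  classical
  simp only [pr, Set.indicator_apply, Set.mem_ofPred_eq, Finset.sum_ite_eq', Finset.mem_univ,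
    if_true]

theorem pr_setOf_eq_and_eq (U : Ω → α) {a b : α} (hab : b ≠ a) :
    pr μ {ω | U ω = a ∧ U ω = b} = 0 := by
  have : {ω | U ω = a ∧ U ω = b} = ∅ := by
    ext ω
    simp only [Set.mem_ofPred_eq, Set.mem_empty_iff_false, iff_false, not_and]
    rintro rfl
    exact hab.symm
  simp [pr, this]

theorem mul_log_div_mul_self (p : ℝ) : p * log (p / (p * p)) = -(p * log p) := by
  rcases eq_or_ne p 0 with rfl | hp
  · simp
  · rw [div_mul_cancel_left₀ hp, log_inv, mul_neg]

theorem MI_self [Fintype α] (U : Ω → α) : MI μ U U = ent μ U := by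
  classical
  rw [MI, ent, ← Finset.sum_neg_distrib]
  refine Finset.sum_congr rfl fun a _ => ?_
  rw [Finset.sum_eq_single a (fun b _ hab => by rw [pr_setOf_eq_and_eq μ U hab, zero_mul])
    (by simp)]
  simp only [and_self, mul_log_div_mul_self]

theorem ent_id : ent μ id = ∑ ω, negMulLog (μ ω) := by
  simp only [ent, id, pr_setOf_eq, negMulLog, neg_mul, Finset.sum_neg_distrib]

end InformationTheory

/-- The law of `Y` with `P(Y = 0) = p`, the value `0` being encoded as `false`. -/
noncomputable def bernoulliPMF (p : ℝ) : Bool → ℝ := fun b => if b then 1 - p else p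

noncomputable def standardizedIndicator (p : ℝ) : Bool → ℝ :=
  fun b => ((if b then (0 : ℝ) else 1) - p) / √(p * (1 - p))

theorem binEntropy_eq_neg_mul_log_add (p : ℝ) :
    binEntropy p = -(p * log p + (1 - p) * log (1 - p)) := by
  rw [binEntropy_eq_negMulLog_add_negMulLog_one_sub, negMulLog, negMulLog]
  ring

theorem ent_bernoulliPMF (p : ℝ) : ent (bernoulliPMF p) id = binEntropy p := by
  rw [ent_id, Fintype.sum_bool, binEntropy_eq_negMulLog_add_negMulLog_one_sub, add_comm]
  rfl

theorem sum_bernoulliPMF_mul_standardizedIndicator (p : ℝ) :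
    ∑ b, bernoulliPMF p b * standardizedIndicator p b = 0 := by
  simp only [bernoulliPMF, standardizedIndicator, Fintype.sum_bool, if_true, if_false,
    Bool.false_eq_true]
  ring

theorem sum_bernoulliPMF_mul_standardizedIndicator_sq {p : ℝ} (hp₀ : 0 < p) (hp₁ : p < 1) :
    ∑ b, bernoulliPMF p b * standardizedIndicator p b ^ 2 = 1 := by
  have hvar : 0 < p * (1 - p) := mul_pos hp₀ (sub_pos.mpr hp₁)
  have hq : 1 - p ≠ 0 := (sub_pos.mpr hp₁).ne'
  simp only [bernoulliPMF, standardizedIndicator, Fintype.sum_bool, if_true, if_false,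
    Bool.false_eq_true, div_pow, sq_sqrt hvar.le]
  field_simp
  ring

theorem standardizedIndicator_correlation_eq_one {p : ℝ} (hp₀ : 0 < p) (hp₁ : p < 1) :
    |∑ b, bernoulliPMF p b * (standardizedIndicator p b * standardizedIndicator p b)| /
      (√(∑ b, bernoulliPMF p b * standardizedIndicator p b ^ 2) *
        √(∑ b, bernoulliPMF p b * standardizedIndicator p b ^ 2)) = 1 := by
  simp only [← sq, sum_bernoulliPMF_mul_standardizedIndicator_sq hp₀ hp₁]
  norm_num

theorem tendsto_binEntropy_nhdsGT_zero : Tendsto binEntropy (𝓝[>] 0) (𝓝 0) := by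
  simpa using binEntropy_continuous.continuousWithinAt (s := Set.Ioi 0) (x := 0) |>.tendsto

theorem exists_binEntropy_lt {δ : ℝ} (hδ : 0 < δ) : ∃ ε ∈ Set.Ioo (0 : ℝ) (1 / 2),
    binEntropy ε < δ :=
  ((tendsto_binEntropy_nhdsGT_zero.eventually (gt_mem_nhds hδ)).and
    (Ioo_mem_nhdsGT (by norm_num))).exists.imp fun _ h => ⟨h.2, h.1⟩

/-- correlation counterexample: with `Y` Bernoulli, `P(Y=0)=ε`, `Z=Y`,
and `f(Y) = g(Z) = (1{Y=0} − ε)/√(ε(1−ε))`, we have `E f = E g = 0`,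
`Cov(f(Y),g(Z)) = 1`, `I(Y;Z) = H(Y) = −ε log ε − (1−ε) log(1−ε) → 0` as `ε → 0⁺`;
hence `|Cov|/(‖f‖_{L²}‖g‖_{L²}) ≤ √(2 I(Y;Z))` fails in general. -/
theorem correlation_counterexample :
    (∀ ε ∈ Set.Ioo (0 : ℝ) (1 / 2),
      (∑ b : Bool, (if b then 1 - ε else ε) *
          (((if b then (0 : ℝ) else 1) - ε) / Real.sqrt (ε * (1 - ε)))) = 0 ∧
      (∑ b : Bool, (if b then 1 - ε else ε) *
          ((((if b then (0 : ℝ) else 1) - ε) / Real.sqrt (ε * (1 - ε))) *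
            (((if b then (0 : ℝ) else 1) - ε) / Real.sqrt (ε * (1 - ε))))) = 1 ∧
      MI (fun b : Bool => if b then 1 - ε else ε) (id : Bool → Bool) id =
        ent (fun b : Bool => if b then 1 - ε else ε) (id : Bool → Bool) ∧
      ent (fun b : Bool => if b then 1 - ε else ε) (id : Bool → Bool) =
        -(ε * Real.log ε + (1 - ε) * Real.log (1 - ε))) ∧
    Tendsto (fun ε : ℝ => -(ε * Real.log ε + (1 - ε) * Real.log (1 - ε)))
      (nhdsWithin 0 (Set.Ioi 0)) (nhds 0) ∧
    ¬ (∀ ε ∈ Set.Ioo (0 : ℝ) (1 / 2),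
      |∑ b : Bool, (if b then 1 - ε else ε) *
          ((((if b then (0 : ℝ) else 1) - ε) / Real.sqrt (ε * (1 - ε))) *
            (((if b then (0 : ℝ) else 1) - ε) / Real.sqrt (ε * (1 - ε))))| /
        (Real.sqrt (∑ b : Bool, (if b then 1 - ε else ε) *
            (((if b then (0 : ℝ) else 1) - ε) / Real.sqrt (ε * (1 - ε))) ^ 2) *
          Real.sqrt (∑ b : Bool, (if b then 1 - ε else ε) *
            (((if b then (0 : ℝ) else 1) - ε) / Real.sqrt (ε * (1 - ε))) ^ 2)) ≤
        Real.sqrt (2 *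
          MI (fun b : Bool => if b then 1 - ε else ε) (id : Bool → Bool) id)) := by
  have hMI (ε : ℝ) : MI (bernoulliPMF ε) id id = binEntropy ε := by
    rw [MI_self, ent_bernoulliPMF]
  refine ⟨fun ε ⟨hε₀, hε₁⟩ => ⟨?_, ?_, ?_, ?_⟩, ?_, ?_⟩
  · exact sum_bernoulliPMF_mul_standardizedIndicator ε
  · simpa only [sq, bernoulliPMF, standardizedIndicator] using
      sum_bernoulliPMF_mul_standardizedIndicator_sq hε₀ (by linarith)
  · exact MI_self _ _
  · rw [← binEntropy_eq_neg_mul_log_add]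
    exact ent_bernoulliPMF ε
  · simpa only [← binEntropy_eq_neg_mul_log_add] using tendsto_binEntropy_nhdsGT_zero
  · intro H
    obtain ⟨ε, hε, hsmall⟩ := exists_binEntropy_lt (by norm_num : (0 : ℝ) < 1 / 2)
    have hbound : 1 ≤ √(2 * binEntropy ε) :=
      (standardizedIndicator_correlation_eq_one hε.1 (by linarith [hε.2])).symm.le.trans
        ((hMI ε).symm ▸ H ε hε)
    have hsqrt : √(2 * binEntropy ε) < 1 := by
      rw [sqrt_lt' one_pos]
      linarith
    linarith
end
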